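/- arXiv:math/0308154 — 2 statements merged into one kernel-verified Lean document; each statement's English description precedes it below -/
import Mathlib

section
/- Let (Ω, F, P) be a probability space and R a nonnegative random variable. Suppose there exist constants κ, K ∈ (0, ∞) such that ∫₀ᵗ u^κ P(R > u) du / t → K as t → ∞. Then t^κ P(R > t) → K as t → ∞. -/
open Filter MeasureTheory intervalIntegral

set_option maxHeartbeats 1000000 in
/-- Goldie's Tauberian lemma: if `∫₀ᵗ u^κ P(R>u) du / t → K ∈ (0,∞)`,
then `t^κ P(R>t) → K`. -/
theorem stmt_5 {Ω : Type*} [MeasurableSpace Ω] (μ : Measure Ω) [IsProbabilityMeasure μ]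
    (R : Ω → ℝ) (hR : Measurable R) (hRpos : ∀ ω, 0 ≤ R ω)
    (κ K : ℝ) (hκ : 0 < κ) (hK : 0 < K)
    (h : Tendsto (fun t : ℝ =>
        (∫ u in (0 : ℝ)..t, u ^ κ * (μ {ω | u < R ω}).toReal) / t) atTop (nhds K)) :
    Tendsto (fun t : ℝ => t ^ κ * (μ {ω | t < R ω}).toReal) atTop (nhds K) := by
  set g : ℝ → ℝ := fun t => (μ {ω | t < R ω}).toReal with hg_def
  have hg_anti : Antitone g := by
    intro s t hst
    exact ENNReal.toReal_mono (measure_ne_top μ _)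
      (measure_mono fun ω hω => lt_of_le_of_lt hst hω)
  have hg_nonneg : ∀ t, 0 ≤ g t := fun t => ENNReal.toReal_nonneg
  have hcont : Continuous fun u : ℝ => u ^ κ := Real.continuous_rpow_const hκ.le
  have hint : ∀ a b : ℝ, IntervalIntegrable (fun u => u ^ κ * g u) volume a b :=
    fun a b => (hg_anti.intervalIntegrable).continuousOn_mul hcont.continuousOn
  set F : ℝ → ℝ := fun t => ∫ u in (0:ℝ)..t, u ^ κ * g u with hF_def
  have hF2 : Tendsto (fun t : ℝ => F t / t) atTop (nhds K) := h
  have key : ∀ a b : ℝ, 0 < a → a ≤ b →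
      g b * ((b ^ (κ+1) - a ^ (κ+1)) / (κ+1)) ≤ F b - F a ∧
      F b - F a ≤ g a * ((b ^ (κ+1) - a ^ (κ+1)) / (κ+1)) := by
    intro a b ha hab
    have hsub : F b - F a = ∫ u in a..b, u ^ κ * g u := by
      have := intervalIntegral.integral_add_adjacent_intervals (hint 0 a) (hint a b)
      simp only [hF_def]
      linarith
    have hrpow_int : ∫ u in a..b, u ^ κ = (b ^ (κ+1) - a ^ (κ+1)) / (κ+1) :=
      integral_rpow (Or.inl (by linarith))
    constructor
    · have hmono : ∫ u in a..b, u ^ κ * g b ≤ ∫ u in a..b, u ^ κ * g u := by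
        refine integral_mono_on hab ((hcont.mul continuous_const).intervalIntegrable a b)
          (hint a b) fun u hu => ?_
        exact mul_le_mul_of_nonneg_left (hg_anti hu.2) (Real.rpow_nonneg (ha.le.trans hu.1) _)
      have : ∫ u in a..b, u ^ κ * g b = g b * ((b ^ (κ+1) - a ^ (κ+1)) / (κ+1)) := by
        rw [intervalIntegral.integral_mul_const, hrpow_int]; ring
      rw [hsub, ← this]; exact hmono
    · have hmono : ∫ u in a..b, u ^ κ * g u ≤ ∫ u in a..b, u ^ κ * g a := by
        refine integral_mono_on hab (hint a b)
          ((hcont.mul continuous_const).intervalIntegrable a b) fun u hu => ?_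
        exact mul_le_mul_of_nonneg_left (hg_anti hu.1) (Real.rpow_nonneg (ha.le.trans hu.1) _)
      have : ∫ u in a..b, u ^ κ * g a = g a * ((b ^ (κ+1) - a ^ (κ+1)) / (κ+1)) := by
        rw [intervalIntegral.integral_mul_const, hrpow_int]; ring
      rw [hsub, ← this]; exact hmono
  clear_value F
  -- limits L, U as δ → 0⁺
  have hφ : Tendsto (fun x : ℝ => ((1+x) ^ (κ+1) - 1) / x) (nhdsWithin 0 (Set.Ioi 0))
      (nhds (κ+1)) := by
    have hd : HasDerivAt (fun x : ℝ => (1+x) ^ (κ+1)) (κ+1) 0 := by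
      have h1 : HasDerivAt (fun y : ℝ => y ^ (κ+1)) ((κ+1) * ((1:ℝ)+0) ^ (κ+1-1)) (1+0) :=
        Real.hasDerivAt_rpow_const (Or.inl (by norm_num))
      have h2 : HasDerivAt (fun x : ℝ => 1 + x) 1 0 := by
        simpa using (hasDerivAt_id (0:ℝ)).const_add 1
      have h3 := h1.comp 0 h2
      norm_num [Real.one_rpow] at h3
      exact h3
    have h4 := hasDerivAt_iff_tendsto_slope.mp hd
    have h3 := h4.mono_left (nhdsWithin_mono 0 fun x (hx : x ∈ Set.Ioi 0) => ne_of_gt hx)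
    refine h3.congr fun x => ?_
    simp [slope_def_field, Real.one_rpow]
  have hL : Tendsto (fun δ : ℝ => (κ+1) * K * δ / ((1+δ) ^ (κ+1) - 1))
      (nhdsWithin 0 (Set.Ioi 0)) (nhds K) := by
    have h1 : Tendsto (fun δ : ℝ => (κ+1) * K / (((1+δ) ^ (κ+1) - 1) / δ))
        (nhdsWithin 0 (Set.Ioi 0)) (nhds ((κ+1) * K / (κ+1))) :=
      (tendsto_const_nhds).div hφ (by positivity)
    have h2 : (κ+1) * K / (κ+1) = K := by field_simp
    rw [h2] at h1
    refine h1.congr fun δ => ?_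
    rw [div_div_eq_mul_div]
  have hUm : Tendsto (fun δ : ℝ => (1+δ) ^ κ) (nhdsWithin 0 (Set.Ioi 0)) (nhds 1) := by
    have h0 : Tendsto (fun δ : ℝ => (1+δ) ^ κ) (nhds 0) (nhds ((1+0:ℝ) ^ κ)) :=
      (hcont.comp (continuous_const.add continuous_id)).tendsto 0
    have h1 := tendsto_nhdsWithin_of_tendsto_nhds (s := Set.Ioi (0:ℝ)) h0
    norm_num [Real.one_rpow] at h1
    exact h1
  have hU : Tendsto (fun δ : ℝ => ((κ+1) * K * δ / ((1+δ) ^ (κ+1) - 1)) * (1+δ) ^ κ)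
      (nhdsWithin 0 (Set.Ioi 0)) (nhds K) := by
    simpa using hL.mul hUm
  -- main ε argument
  rw [Metric.tendsto_nhds]
  intro ε hε
  obtain ⟨δ, hδfacts, hδpos⟩ :=
    (((hL.eventually (eventually_gt_nhds (show K - ε/2 < K by linarith))).and
      (hU.eventually (eventually_lt_nhds (show K < K + ε/2 by linarith)))).and
      self_mem_nhdsWithin).exists
  obtain ⟨hLδ, hUδ⟩ := hδfacts
  have hδ0 : (0:ℝ) < δ := hδpos
  have h1δ : (1:ℝ) < 1 + δ := by linarith
  have hepos : 0 < (1+δ) ^ (κ+1) - 1 := by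
    have : (1:ℝ) < (1+δ) ^ (κ+1) := Real.one_lt_rpow_iff_of_pos (by linarith) |>.mpr
      (Or.inl ⟨h1δ, by linarith⟩)
    linarith
  set e : ℝ := (1+δ) ^ (κ+1) - 1 with he_def
  -- limits of A and B
  have hcomp1 : Tendsto (fun t : ℝ => F (t * (1+δ)) / t) atTop (nhds (K * (1+δ))) := by
    have hm : Tendsto (fun t : ℝ => t * (1+δ)) atTop atTop :=
      Tendsto.atTop_mul_const (by linarith) tendsto_id
    have h5 := (hF2.comp hm).mul_const (1+δ)
    refine h5.congr' ?_
    filter_upwards [eventually_gt_atTop (0:ℝ)] with t ht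
    have ht' : t ≠ 0 := ne_of_gt ht
    have hδ' : (1:ℝ)+δ ≠ 0 := by positivity
    simp only [Function.comp]
    field_simp
    try ring
  have hcomp2 : Tendsto (fun t : ℝ => F (t / (1+δ)) / t) atTop (nhds (K / (1+δ))) := by
    have hm : Tendsto (fun t : ℝ => t / (1+δ)) atTop atTop :=
      Tendsto.atTop_div_const (by linarith) tendsto_id
    have h5 := (hF2.comp hm).div_const (1+δ)
    refine h5.congr' ?_
    filter_upwards [eventually_gt_atTop (0:ℝ)] with t ht
    have ht' : t ≠ 0 := ne_of_gt ht
    have hδ' : (1:ℝ)+δ ≠ 0 := by positivity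
    simp only [Function.comp]
    field_simp
    try ring
  have hA : Tendsto (fun t : ℝ => (κ+1) * (F (t * (1+δ)) - F t) / (t * e)) atTop
      (nhds ((κ+1) * K * δ / e)) := by
    have h5 := ((hcomp1.sub hF2).const_mul (κ+1)).div_const e
    have heq : (κ+1) * (K * (1+δ) - K) / e = (κ+1) * K * δ / e := by ring_nf
    rw [heq] at h5
    refine h5.congr' ?_
    filter_upwards [eventually_gt_atTop (0:ℝ)] with t ht
    have ht' : t ≠ 0 := ne_of_gt ht
    by_cases hez : e = 0
    · simp [hez]
    field_simp
    try ring
  have hB : Tendsto (fun t : ℝ => (κ+1) * (1+δ) ^ (κ+1) * (F t - F (t / (1+δ))) / (t * e))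
      atTop (nhds (((κ+1) * K * δ / e) * (1+δ) ^ κ)) := by
    have h5 := ((hF2.sub hcomp2).const_mul ((κ+1) * (1+δ) ^ (κ+1))).div_const e
    have hne : (1:ℝ)+δ ≠ 0 := by positivity
    have hpow : (1+δ) ^ (κ+1) = (1+δ) ^ κ * (1+δ) := by
      rw [Real.rpow_add (by linarith), Real.rpow_one]
    have heq : (κ+1) * (1+δ) ^ (κ+1) * (K - K / (1+δ)) / e
        = ((κ+1) * K * δ / e) * (1+δ) ^ κ := by
      rw [hpow]
      field_simp
      ring
    rw [heq] at h5
    refine h5.congr' ?_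
    filter_upwards [eventually_gt_atTop (0:ℝ)] with t ht
    have ht' : t ≠ 0 := ne_of_gt ht
    by_cases hez : e = 0
    · simp [hez]
    field_simp
    try ring
  -- sandwich
  filter_upwards [hA.eventually (eventually_gt_nhds hLδ),
    hB.eventually (eventually_lt_nhds hUδ), eventually_gt_atTop (0:ℝ)] with t hAt hBt ht
  have hte : 0 < t * e := by positivity
  have ht1 : t ≤ t * (1+δ) := by nlinarith
  have ht2 : t / (1+δ) ≤ t := by
    rw [div_le_iff₀ (by linarith)]; nlinarith
  have ht2' : 0 < t / (1+δ) := by positivity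
  have hmul : (t * (1+δ)) ^ (κ+1) = t ^ (κ+1) * (1+δ) ^ (κ+1) :=
    Real.mul_rpow ht.le (by linarith)
  have hdiv : (t / (1+δ)) ^ (κ+1) = t ^ (κ+1) / (1+δ) ^ (κ+1) :=
    Real.div_rpow ht.le (show (0:ℝ) ≤ 1+δ by linarith) (κ+1)
  have htk : t ^ (κ+1) = t ^ κ * t := by
    rw [Real.rpow_add ht, Real.rpow_one]
  have hpowpos : 0 < (1+δ) ^ (κ+1) := Real.rpow_pos_of_pos (by linarith) _
  have hk1 : (0:ℝ) < κ + 1 := by linarith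
  have hlow : (κ+1) * (F (t * (1+δ)) - F t) / (t * e) ≤ t ^ κ * g t := by
    rw [div_le_iff₀ hte, he_def]
    have hkey := (key t (t * (1+δ)) ht ht1).2
    rw [hmul, htk] at hkey
    have h5 := mul_le_mul_of_nonneg_right hkey hk1.le
    have h6 : g t * ((t ^ κ * t * (1+δ) ^ (κ+1) - t ^ κ * t) / (κ+1)) * (κ+1)
        = t ^ κ * g t * (t * ((1+δ) ^ (κ+1) - 1)) := by
      field_simp
    rw [h6] at h5
    linarith [h5]
  have hup : t ^ κ * g t ≤ (κ+1) * (1+δ) ^ (κ+1) * (F t - F (t / (1+δ))) / (t * e) := by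
    rw [le_div_iff₀ hte, he_def]
    have hkey := (key (t / (1+δ)) t ht2' ht2).1
    rw [hdiv, htk] at hkey
    have hk2 : (0:ℝ) ≤ (κ+1) * (1+δ) ^ (κ+1) := by positivity
    have h5 := mul_le_mul_of_nonneg_right hkey hk2
    have h6 : g t * ((t ^ κ * t - t ^ κ * t / (1+δ) ^ (κ+1)) / (κ+1)) * ((κ+1) * (1+δ) ^ (κ+1))
        = t ^ κ * g t * (t * ((1+δ) ^ (κ+1) - 1)) := by
      field_simp
    rw [h6] at h5
    linarith [h5]
  show dist (t ^ κ * g t) K < ε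
  rw [Real.dist_eq, abs_lt]
  constructor <;> linarith
end

section
/- Let Q, M, R̂ be random variables with Q ≥ 0 and M > 0 a.s., R = Q + M·R̂, and suppose: (1) lim_{t→∞} t^κ P(M R̂ > t) = K exists in (0, ∞) for some κ > 0; (2) E(Q^β) < ∞ for some β > κ. Then lim_{t→∞} t^κ P(R > t) = K. -/
/-!
Choose `α` with `κ / β < α < 1`. If `Q < t ^ α`, then `R > t` forces `M R̂ > t - t ^ α`, so
`P(M R̂ > t) ≤ P(R > t) ≤ P(M R̂ > t - t ^ α) + P(Q ≥ t ^ α)`. Since `(t - t ^ α) / t → 1`, the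
first term on the right is still `~ K t ^ (-κ)`, while Markov's inequality for `Q ^ β` makes the
second `O(t ^ (-α β)) = o(t ^ (-κ))`.
-/

open Filter MeasureTheory Topology

theorem tendsto_sub_rpow_div_self {α : ℝ} (hα : α < 1) :
    Tendsto (fun t : ℝ => (t - t ^ α) / t) atTop (𝓝 1) := by
  have hsmall : Tendsto (fun t : ℝ => t ^ (α - 1)) atTop (𝓝 0) := by
    simpa only [neg_sub] using tendsto_rpow_neg_atTop (y := 1 - α) (by linarith)
  refine (by simpa using tendsto_const_nhds.sub hsmall :
    Tendsto (fun t : ℝ => 1 - t ^ (α - 1)) atTop (𝓝 1)).congr' ?_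
  filter_upwards [eventually_gt_atTop 0] with t ht
  rw [sub_div, div_self ht.ne', Real.rpow_sub_one ht.ne']

theorem tendsto_rpow_mul_comp_of_div_tendsto_one {F g : ℝ → ℝ} {κ K : ℝ}
    (hF : Tendsto (fun t => t ^ κ * F t) atTop (𝓝 K))
    (hg : Tendsto (fun t => g t / t) atTop (𝓝 1)) :
    Tendsto (fun t => t ^ κ * F (g t)) atTop (𝓝 K) := by
  have hg_atTop : Tendsto g atTop atTop := Tendsto.num tendsto_id one_pos hg
  have hratio : Tendsto (fun t => ((g t / t) ^ κ)⁻¹) atTop (𝓝 1) := by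
    simpa using ((Real.continuousAt_rpow_const 1 κ (Or.inl one_ne_zero)).tendsto.comp hg).inv₀
      (by norm_num)
  refine (by simpa using hratio.mul (hF.comp hg_atTop) :
    Tendsto (fun t => ((g t / t) ^ κ)⁻¹ * (g t ^ κ * F (g t))) atTop (𝓝 K)).congr' ?_
  filter_upwards [eventually_gt_atTop 0, hg_atTop.eventually_gt_atTop 0] with t ht hgt
  rw [Real.div_rpow hgt.le ht.le, inv_div, ← mul_assoc,
    div_mul_cancel₀ _ (Real.rpow_pos_of_pos hgt κ).ne']

section Tails

variable {Ω : Type*} [MeasurableSpace Ω] {μ : Measure Ω} [IsFiniteMeasure μ] {Q X : Ω → ℝ}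

theorem measureReal_ge_le_integral_rpow_div (hQ : ∀ᵐ ω ∂μ, 0 ≤ Q ω) {β s : ℝ} (hβ : 0 < β)
    (hs : 0 < s) (hQβ : Integrable (fun ω => Q ω ^ β) μ) :
    μ.real {ω | s ≤ Q ω} ≤ (∫ ω, Q ω ^ β ∂μ) / s ^ β := by
  rw [le_div_iff₀' (Real.rpow_pos_of_pos hs β)]
  calc s ^ β * μ.real {ω | s ≤ Q ω} ≤ s ^ β * μ.real {ω | s ^ β ≤ Q ω ^ β} := by
        refine mul_le_mul_of_nonneg_left (measureReal_mono fun ω (hω : s ≤ Q ω) => ?_)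
          (by positivity)
        exact Real.rpow_le_rpow hs.le hω hβ.le
    _ ≤ ∫ ω, Q ω ^ β ∂μ :=
        mul_meas_ge_le_integral_of_nonneg (hQ.mono fun ω h => Real.rpow_nonneg h β) hQβ _

theorem tendsto_rpow_mul_measureReal_ge_rpow (hQ : ∀ᵐ ω ∂μ, 0 ≤ Q ω) {α β κ : ℝ} (hβ : 0 < β)
    (hκ : κ < α * β) (hQβ : Integrable (fun ω => Q ω ^ β) μ) :
    Tendsto (fun t : ℝ => t ^ κ * μ.real {ω | t ^ α ≤ Q ω}) atTop (𝓝 0) := by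
  set I := ∫ ω, Q ω ^ β ∂μ
  have hbound : Tendsto (fun t : ℝ => I * t ^ (κ - α * β)) atTop (𝓝 0) := by
    simpa only [mul_zero, neg_sub] using
      tendsto_const_nhds (x := I).mul (tendsto_rpow_neg_atTop (y := α * β - κ) (by linarith))
  refine tendsto_of_tendsto_of_tendsto_of_le_of_le' tendsto_const_nhds hbound ?_ ?_
  · filter_upwards [eventually_ge_atTop 0] with t ht
    positivity
  · filter_upwards [eventually_gt_atTop 0] with t ht
    calc t ^ κ * μ.real {ω | t ^ α ≤ Q ω} ≤ t ^ κ * (I / (t ^ α) ^ β) := by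
          gcongr
          exact measureReal_ge_le_integral_rpow_div hQ hβ (by positivity) hQβ
      _ = I * t ^ (κ - α * β) := by
          rw [← Real.rpow_mul ht.le, Real.rpow_sub ht]
          ring

theorem measureReal_lt_le_measureReal_lt_add (hQ : ∀ᵐ ω ∂μ, 0 ≤ Q ω) (t : ℝ) :
    μ.real {ω | t < X ω} ≤ μ.real {ω | t < Q ω + X ω} :=
  ENNReal.toReal_mono (measure_ne_top _ _) <| measure_mono_ae <| by
    filter_upwards [hQ] with ω hω hlt
    exact lt_add_of_nonneg_of_lt hω hlt

theorem measureReal_lt_add_le (t s : ℝ) :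
    μ.real {ω | t < Q ω + X ω} ≤ μ.real {ω | t - s < X ω} + μ.real {ω | s ≤ Q ω} := by
  refine le_trans (measureReal_mono fun ω (hω : t < Q ω + X ω) => ?_) (measureReal_union_le _ _)
  by_cases hQs : s ≤ Q ω
  · exact Or.inr hQs
  · exact Or.inl (show t - s < X ω by linarith)

end Tails

theorem stmt_10_general {Ω : Type*} [MeasurableSpace Ω] (μ : Measure Ω) [IsProbabilityMeasure μ]
    (Q M Rh : Ω → ℝ)
    (hQ : ∀ᵐ ω ∂μ, 0 ≤ Q ω)
    (κ K : ℝ) (hκ : 0 < κ)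
    (hlim : Tendsto (fun t : ℝ => t ^ κ * (μ {ω | t < M ω * Rh ω}).toReal)
      atTop (nhds K))
    (β : ℝ) (hβ : κ < β) (hQβ : Integrable (fun ω => Q ω ^ β) μ) :
    Tendsto (fun t : ℝ => t ^ κ * (μ {ω | t < Q ω + M ω * Rh ω}).toReal)
      atTop (nhds K) := by
  have hβ₀ : 0 < β := hκ.trans hβ
  obtain ⟨α, hκα, hα⟩ : ∃ α, κ / β < α ∧ α < 1 := exists_between ((div_lt_one hβ₀).2 hβ)
  have hshifted :
      Tendsto (fun t : ℝ => t ^ κ * μ.real {ω | t - t ^ α < M ω * Rh ω}) atTop (𝓝 K) :=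
    tendsto_rpow_mul_comp_of_div_tendsto_one hlim (tendsto_sub_rpow_div_self hα)
  have hQtail : Tendsto (fun t : ℝ => t ^ κ * μ.real {ω | t ^ α ≤ Q ω}) atTop (𝓝 0) :=
    tendsto_rpow_mul_measureReal_ge_rpow hQ hβ₀ ((div_lt_iff₀ hβ₀).1 hκα) hQβ
  refine tendsto_of_tendsto_of_tendsto_of_le_of_le' hlim (by simpa using hshifted.add hQtail)
    ?_ ?_ <;> filter_upwards [eventually_ge_atTop 0] with t ht
  · exact mul_le_mul_of_nonneg_left (measureReal_lt_le_measureReal_lt_add hQ t) (by positivity)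
  · rw [← mul_add]
    exact mul_le_mul_of_nonneg_left (measureReal_lt_add_le t (t ^ α)) (by positivity)

/-- if `R = Q + M·R̂` with `Q ≥ 0`, `M > 0` a.s.,
`t^κ P(M R̂ > t) → K ∈ (0,∞)` and `E(Q^β) < ∞` for some `β > κ`, then
`t^κ P(R > t) → K`. -/
theorem stmt_10 {Ω : Type*} [MeasurableSpace Ω] (μ : Measure Ω) [IsProbabilityMeasure μ]
    (Q M Rh : Ω → ℝ)
    (hQ : ∀ᵐ ω ∂μ, 0 ≤ Q ω) (hM : ∀ᵐ ω ∂μ, 0 < M ω)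
    (κ K : ℝ) (hκ : 0 < κ) (hK : 0 < K)
    (hlim : Tendsto (fun t : ℝ => t ^ κ * (μ {ω | t < M ω * Rh ω}).toReal)
      atTop (nhds K))
    (β : ℝ) (hβ : κ < β) (hQβ : Integrable (fun ω => Q ω ^ β) μ) :
    Tendsto (fun t : ℝ => t ^ κ * (μ {ω | t < Q ω + M ω * Rh ω}).toReal)
      atTop (nhds K) :=
  stmt_10_general μ Q M Rh hQ κ K hκ hlim β hβ hQβ
end
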